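/- Let λ ≠ 1, let g be a nonzero real constant (the gravitational coupling), let τ_{abc} be a totally antisymmetric real tensor (the totally antisymmetric spin angular momentum), and define f : W₀ → ℝ by f(H) := q(H) − 2g H^{abc} τ_{abc} on the constraint subspace W₀ := {H ∈ W : H_{ijk} = 0 for all i,j,k ∈ {1,2,3}}. Then f has a critical point if and only if Σ_{j=1}^{3} K_{ijj} = 0 for each i ∈ {1,2,3}; and in that case H ∈ W₀ is a critical point of f if and only if H_{0ij} = K_{0ij} + (g/(λ−1)) τ_{0ij} and H_{ij0} = K_{ij0} + (g/(λ−1)) τ_{0ij} for all i,j ∈ {1,2,3}, the components H_{0i0} being arbitrary. -/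

import Mathlib

open Finset

noncomputable section

/- Index set {0,1,2,3}. -/
abbrev Idx := Fin 4

/-- The Minkowski metric η_{ab} = diag(−1,1,1,1) (which equals its inverse η^{ab}). -/
def ηm (a b : Idx) : ℝ := if a = b then (if a = (0 : Idx) then -1 else 1) else 0

/- Rank-3 tensors H_{abc} (all indices lowered). -/
abbrev T3 := Idx → Idx → Idx → ℝ

/-- Raising all three indices: H^{abc} = η^{aa'} η^{bb'} η^{cc'} H_{a'b'c'}. -/
def up3 (H : T3) (a b c : Idx) : ℝ :=
  ∑ a', ∑ b', ∑ c', ηm a a' * ηm b b' * ηm c c' * H a' b' c'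

/-- Total antisymmetrization H_{[abc]} with weight 1/3!. -/
def asym (H : T3) (a b c : Idx) : ℝ :=
  (H a b c - H a c b + H b c a - H b a c + H c a b - H c b a) / 6

/-- The contraction H^a{}_{ca} (free index c): η^{aa'} H_{a'ca}. -/
def tr1 (H : T3) (c : Idx) : ℝ := ∑ a, ∑ a', ηm a a' * H a' c a

/-- The contraction H^{cb}{}_b (free index c): η^{cc'} η^{bb'} H_{c'b'b}. -/
def tr2 (H : T3) (c : Idx) : ℝ := ∑ b, ∑ c', ∑ b', ηm c c' * ηm b b' * H c' b' b

/-- The quadratic functional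
`q(H) = H^{abc}(H_{cba} − 2K_{cba}) + H^a{}_{ca}(H^{cb}{}_b − 2K^{cb}{}_b)
        + λ H^{[abc]}(H_{[abc]} − 2K_{[abc]})`. -/
def qfun (lam : ℝ) (K H : T3) : ℝ :=
  (∑ a, ∑ b, ∑ c, up3 H a b c * (H c b a - 2 * K c b a))
  + (∑ c, tr1 H c * (tr2 H c - 2 * tr2 K c))
  + lam * ∑ a, ∑ b, ∑ c,
      up3 (fun x y z => asym H x y z) a b c * (asym H a b c - 2 * asym K a b c)

/-- `W`: the space of rank-3 tensors antisymmetric in their first two indices. -/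
def Wsub : Submodule ℝ T3 where
  carrier := {H | ∀ a b c, H a b c = -H b a c}
  add_mem' := by
    intro x y hx hy a b c
    simp only [Pi.add_apply]
    rw [hx a b c, hy a b c]; ring
  zero_mem' := by intro a b c; simp
  smul_mem' := by
    intro r x hx a b c
    simp only [Pi.smul_apply, smul_eq_mul]
    rw [hx a b c]; ring

/-- `W₀`: the semi-teleparallel constraint subspace of `W`, consisting of tensors
antisymmetric in their first two indices whose purely spatial components vanish
(`H_{ijk} = 0` for `i,j,k ∈ {1,2,3}`). -/
def W0 : Submodule ℝ T3 where
  carrier := {H | (∀ a b c, H a b c = -H b a c) ∧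
    ∀ i j k : Fin 3, H i.succ j.succ k.succ = 0}
  add_mem' := by
    intro x y hx hy
    constructor
    · intro a b c
      simp only [Pi.add_apply]
      rw [hx.1 a b c, hy.1 a b c]; ring
    · intro i j k
      simp only [Pi.add_apply]
      rw [hx.2 i j k, hy.2 i j k]; ring
  zero_mem' := by
    constructor
    · intro a b c; simp
    · intro i j k; simp
  smul_mem' := by
    intro r x hx
    constructor
    · intro a b c
      simp only [Pi.smul_apply, smul_eq_mul]
      rw [hx.1 a b c]; ring
    · intro i j k
      simp only [Pi.smul_apply, smul_eq_mul]
      rw [hx.2 i j k]; ring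

/-!
On `W` the functional is `q(H) = B(H, H) − 2 B(H, K)` for the symmetric bilinear form
`B = qform λ`, so the derivative of `f` at `H ∈ W₀` in a direction `v ∈ W₀` is
`2 (B(H − K, v) − g ⟨v, τ⟩)`, where `⟨v, τ⟩ = v^{abc} τ_{abc}` is `minkPairing v τ`. For totally
antisymmetric `τ` one has `B(τ, v) = (λ − 1) ⟨v, τ⟩`, hence the source is absorbed by the shift
`D = H − K − (g / (λ − 1)) τ`: `H` is critical iff `B(D, ·)` vanishes on `W₀`. Testing against the
elementary antisymmetric tensors spanning `W₀` yields `Σⱼ D_{jij} = 0`, which only involves `K`,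
together with a linear system in the components `D_{0ij}`, `D_{ij0}` whose only solution for
`λ ≠ 1` is zero.
-/

section QuadraticOnSubmodule

variable {𝕜 : Type*} [NontriviallyNormedField 𝕜] [CompleteSpace 𝕜]
  {E : Type*} [NormedAddCommGroup E] [NormedSpace 𝕜 E] [FiniteDimensional 𝕜 E]

theorem fderiv_submodule_bilin_add_linear (B : LinearMap.BilinForm 𝕜 E) (L : E →ₗ[𝕜] 𝕜)
    (p : Submodule 𝕜 E) (h v : p) :
    fderiv 𝕜 (fun x : p => B x x + L x) h v = B h v + B v h + L v := by
  have hB := B.toContinuousBilinearMap.hasFDerivAt_of_bilinear p.subtypeL.hasFDerivAt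
    p.subtypeL.hasFDerivAt (x := h)
  have hL := (L.toContinuousLinearMap.comp p.subtypeL).hasFDerivAt (x := h)
  rw [HasFDerivAt.fderiv (by exact hB.add hL)]
  simp [add_comm]

end QuadraticOnSubmodule

lemma sum_ηm_mul (a : Idx) (f : Idx → ℝ) : ∑ x, ηm a x * f x = ηm a a * f a :=
  Fintype.sum_eq_single a fun x hx => by simp [ηm, Ne.symm hx]

lemma up3_eq (X : T3) (a b c : Idx) : up3 X a b c = ηm a a * ηm b b * ηm c c * X a b c := by
  simp only [up3, mul_assoc, ← mul_sum, sum_ηm_mul]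

lemma tr1_eq (X : T3) (c : Idx) : tr1 X c = ∑ a, ηm a a * X a c a := by
  simp only [tr1, sum_ηm_mul]

lemma tr2_eq (X : T3) (c : Idx) : tr2 X c = ηm c c * ∑ b, ηm b b * X c b b := by
  simp only [tr2, mul_assoc, ← mul_sum, sum_ηm_mul]

lemma tr2_eq_of_mem_Wsub {X : T3} (hX : X ∈ Wsub) (c : Idx) :
    tr2 X c = -(ηm c c * tr1 X c) := by
  simp only [tr2_eq, tr1_eq, mul_sum, ← sum_neg_distrib]
  exact sum_congr rfl fun b _ => by rw [hX c b b]; ring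

lemma mem_Wsub_apply_self {X : T3} (hX : X ∈ Wsub) (a c : Idx) : X a a c = 0 := by
  linarith [hX a a c]

lemma asym_eq_of_mem_Wsub {X : T3} (hX : X ∈ Wsub) (a b c : Idx) :
    asym X a b c = (X a b c + X b c a + X c a b) / 3 := by
  simp only [asym]; rw [hX a c b, hX b a c, hX c b a]; ring

lemma W0_le_Wsub : W0 ≤ Wsub := fun _ hX => hX.1

lemma mem_W0_apply_eq_zero {X : T3} (hX : X ∈ W0) {a b c : Idx}
    (ha : a ≠ 0) (hb : b ≠ 0) (hc : c ≠ 0) : X a b c = 0 := by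
  obtain ⟨i, rfl⟩ := Fin.exists_succ_eq.mpr ha
  obtain ⟨j, rfl⟩ := Fin.exists_succ_eq.mpr hb
  obtain ⟨k, rfl⟩ := Fin.exists_succ_eq.mpr hc
  exact hX.2 i j k

lemma totally_antisymm_cyclic {τ : T3} (hτ1 : ∀ a b c, τ a b c = -τ b a c)
    (hτ2 : ∀ a b c, τ a b c = -τ a c b) (a b c : Idx) : τ c a b = τ a b c := by
  linear_combination hτ1 a c b - hτ2 a b c

def minkPairing : LinearMap.BilinForm ℝ T3 :=
  LinearMap.mk₂ ℝ (fun A C => ∑ a, ∑ b, ∑ c, up3 A a b c * C a b c)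
    (fun _ _ _ => by simp only [up3_eq, Pi.add_apply, mul_add, add_mul, sum_add_distrib])
    (fun _ _ _ => by
      simp only [up3_eq, Pi.smul_apply, smul_eq_mul, mul_sum, mul_assoc, mul_left_comm])
    (fun _ _ _ => by simp only [Pi.add_apply, mul_add, sum_add_distrib])
    (fun _ _ _ => by simp only [Pi.smul_apply, smul_eq_mul, mul_sum, mul_left_comm])

def tracePairing : LinearMap.BilinForm ℝ T3 :=
  LinearMap.mk₂ ℝ (fun A C => ∑ c, tr1 A c * tr2 C c)
    (fun _ _ _ => by simp only [tr1_eq, Pi.add_apply, mul_add, add_mul, sum_add_distrib])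
    (fun _ _ _ => by
      simp only [tr1_eq, Pi.smul_apply, smul_eq_mul, mul_sum, mul_left_comm, sum_mul, mul_assoc])
    (fun _ _ _ => by simp only [tr2_eq, Pi.add_apply, mul_add, sum_add_distrib])
    (fun _ _ _ => by simp only [tr2_eq, Pi.smul_apply, smul_eq_mul, mul_sum, mul_left_comm])

def revₗ : T3 →ₗ[ℝ] T3 where
  toFun C a b c := C c b a
  map_add' _ _ := rfl
  map_smul' _ _ := rfl

def asymₗ : T3 →ₗ[ℝ] T3 where
  toFun := asym
  map_add' _ _ := by ext; simp only [asym, Pi.add_apply]; ring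
  map_smul' _ _ := by ext; simp only [asym, Pi.smul_apply, smul_eq_mul, RingHom.id_apply]; ring

def qform (lam : ℝ) : LinearMap.BilinForm ℝ T3 :=
  minkPairing.compl₂ revₗ + tracePairing + lam • minkPairing.compl₁₂ asymₗ asymₗ

lemma qfun_eq (lam : ℝ) (K H : T3) : qfun lam K H = qform lam H H - 2 * qform lam H K := by
  have hasym : (fun x y z => asym H x y z) = asym H := rfl
  simp only [qfun, hasym, qform, LinearMap.add_apply, LinearMap.smul_apply, LinearMap.compl₂_apply,
    LinearMap.compl₁₂_apply, minkPairing, tracePairing, revₗ, asymₗ, LinearMap.mk₂_apply,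
    LinearMap.coe_mk, AddHom.coe_mk, smul_eq_mul, mul_sub, sum_sub_distrib, mul_left_comm _ (2 : ℝ),
    ← mul_sum]
  ring

lemma minkPairing_comm (A C : T3) : minkPairing A C = minkPairing C A := by
  simp only [minkPairing, LinearMap.mk₂_apply, up3_eq, mul_comm, mul_left_comm]

lemma minkPairing_rev_comm (A C : T3) : minkPairing A (revₗ C) = minkPairing C (revₗ A) := by
  simp only [minkPairing, revₗ, LinearMap.mk₂_apply, LinearMap.coe_mk, AddHom.coe_mk, up3_eq]
  calc _ = ∑ b, ∑ c, ∑ a, ηm a a * ηm b b * ηm c c * A a b c * C c b a :=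
        sum_comm.trans (sum_congr rfl fun _ _ => sum_comm)
    _ = _ := by rw [sum_comm]; simp only [mul_comm, mul_left_comm]

lemma tracePairing_comm {A C : T3} (hA : A ∈ Wsub) (hC : C ∈ Wsub) :
    tracePairing A C = tracePairing C A := by
  simp only [tracePairing, LinearMap.mk₂_apply, tr2_eq_of_mem_Wsub hA, tr2_eq_of_mem_Wsub hC,
    mul_neg, mul_comm, mul_left_comm]

lemma qform_comm (lam : ℝ) {A C : T3} (hA : A ∈ Wsub) (hC : C ∈ Wsub) :
    qform lam A C = qform lam C A := by
  simp only [qform, LinearMap.add_apply, LinearMap.smul_apply, LinearMap.compl₂_apply,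
    LinearMap.compl₁₂_apply, minkPairing_rev_comm A, minkPairing_comm (asymₗ A),
    tracePairing_comm hA hC]

lemma fderiv_qfun_sub_apply (lam g : ℝ) {K : T3} (hK : K ∈ Wsub) (τ : T3) (H v : W0) :
    fderiv ℝ (fun H : W0 =>
        qfun lam K (H : T3) - 2 * g * ∑ a, ∑ b, ∑ c, up3 (H : T3) a b c * τ a b c) H v =
      2 * (qform lam (H - K) v - g * minkPairing v τ) := by
  have hf : (fun H : W0 =>
      qfun lam K (H : T3) - 2 * g * ∑ a, ∑ b, ∑ c, up3 (H : T3) a b c * τ a b c) =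
      fun X : W0 => qform lam X X +
        ((-2 : ℝ) • (qform lam).flip K - (2 * g) • minkPairing.flip τ) X := by
    funext X
    simp only [qfun_eq, LinearMap.sub_apply, LinearMap.smul_apply, LinearMap.BilinForm.flip_apply,
      smul_eq_mul, minkPairing, LinearMap.mk₂_apply]
    ring
  rw [hf, fderiv_submodule_bilin_add_linear]
  simp only [LinearMap.sub_apply, LinearMap.smul_apply, LinearMap.BilinForm.flip_apply, smul_eq_mul,
    map_sub]
  rw [qform_comm lam (W0_le_Wsub v.2) (W0_le_Wsub H.2), qform_comm lam (W0_le_Wsub v.2) hK]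
  ring

def antisymmSingle (a b c : Idx) : T3 := fun x y z =>
  if z = c then (if x = a ∧ y = b then 1 else 0) - (if x = b ∧ y = a then 1 else 0) else 0

lemma antisymmSingle_swap (a b c : Idx) : antisymmSingle b a c = -antisymmSingle a b c := by
  ext x y z; simp only [antisymmSingle, Pi.neg_apply]; split_ifs <;> ring

lemma antisymmSingle_self (a c : Idx) : antisymmSingle a a c = 0 := by
  ext x y z; simp [antisymmSingle]

lemma antisymmSingle_mem_W0 {a b c : Idx} (h : a = 0 ∨ b = 0 ∨ c = 0) :
    antisymmSingle a b c ∈ W0 := by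
  refine ⟨fun x y z => ?_, fun i j k => ?_⟩
  · simp only [antisymmSingle, and_comm (a := y = _)]; split_ifs <;> ring
  · rcases h with rfl | rfl | rfl <;> simp [antisymmSingle, Fin.succ_ne_zero]

lemma two_mul_map_eq_sum_antisymmSingle (F : T3 →ₗ[ℝ] ℝ) {v : T3} (hv : v ∈ Wsub) :
    2 * F v = ∑ a, ∑ b, ∑ c, v a b c * F (antisymmSingle a b c) := by
  have hdecomp : (2 : ℝ) • v = ∑ a, ∑ b, ∑ c, v a b c • antisymmSingle a b c := by
    ext x y z
    simp only [Pi.smul_apply, smul_eq_mul, Finset.sum_apply, antisymmSingle, ite_and, mul_ite,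
      mul_sub, mul_one, mul_zero, sum_ite_eq, mem_univ, ↓reduceIte, sum_sub_distrib, sum_ite_irrel,
      sum_const_zero]
    linarith [hv x y z]
  rw [← smul_eq_mul, ← map_smul, hdecomp]
  simp only [map_sum, map_smul, smul_eq_mul]

lemma map_antisymmSingle_eq_zero (F : T3 →ₗ[ℝ] ℝ)
    (h₁ : ∀ i : Fin 3, F (antisymmSingle 0 i.succ 0) = 0)
    (h₂ : ∀ i j : Fin 3, F (antisymmSingle 0 i.succ j.succ) = 0)
    (h₃ : ∀ i j : Fin 3, F (antisymmSingle i.succ j.succ 0) = 0)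
    {a b c : Idx} (h : a = 0 ∨ b = 0 ∨ c = 0) : F (antisymmSingle a b c) = 0 := by
  have h₀ : ∀ (i : Fin 3) (c : Idx), F (antisymmSingle 0 i.succ c) = 0 := fun i c => by
    cases c using Fin.cases with
    | zero => exact h₁ i
    | succ j => exact h₂ i j
  cases a using Fin.cases with
  | zero =>
    cases b using Fin.cases with
    | zero => simp [antisymmSingle_self]
    | succ i => exact h₀ i c
  | succ i =>
    cases b using Fin.cases with
    | zero => rw [antisymmSingle_swap, map_neg, h₀, neg_zero]
    | succ j =>
      obtain rfl : c = 0 := by simpa [Fin.succ_ne_zero] using h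
      exact h₃ i j

lemma forall_mem_W0_map_eq_zero_iff (F : T3 →ₗ[ℝ] ℝ) :
    (∀ v ∈ W0, F v = 0) ↔
      (∀ i : Fin 3, F (antisymmSingle 0 i.succ 0) = 0) ∧
      (∀ i j : Fin 3, F (antisymmSingle 0 i.succ j.succ) = 0) ∧
      (∀ i j : Fin 3, F (antisymmSingle i.succ j.succ 0) = 0) := by
  refine ⟨fun h => ⟨fun i => h _ (antisymmSingle_mem_W0 (by simp)),
    fun i j => h _ (antisymmSingle_mem_W0 (by simp)),
    fun i j => h _ (antisymmSingle_mem_W0 (by simp))⟩, fun ⟨h₁, h₂, h₃⟩ v hv => ?_⟩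
  have h2v := two_mul_map_eq_sum_antisymmSingle F (W0_le_Wsub hv)
  suffices ∀ a b c, v a b c * F (antisymmSingle a b c) = 0 by simpa [this] using h2v
  intro a b c
  by_cases h : a = 0 ∨ b = 0 ∨ c = 0
  · rw [map_antisymmSingle_eq_zero F h₁ h₂ h₃ h, mul_zero]
  · obtain ⟨ha, hb, hc⟩ := not_or.mp h |>.imp_right not_or.mp
    rw [mem_W0_apply_eq_zero hv ha hb hc, zero_mul]

lemma qform_antisymmSingle (lam : ℝ) (D : T3) (a b c : Idx) :
    qform lam D (antisymmSingle a b c) =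
      ηm a a * ηm b b * ηm c c * (D c b a - D c a b + 2 * lam * asym D a b c) +
        ηm c c * ((if b = c then ηm a a * tr1 D a else 0) -
          (if a = c then ηm b b * tr1 D b else 0)) := by
  have hrev : minkPairing D (revₗ (antisymmSingle a b c)) =
      ηm a a * ηm b b * ηm c c * (D c b a - D c a b) := by
    simp only [minkPairing, up3_eq, revₗ, LinearMap.coe_mk, AddHom.coe_mk, antisymmSingle, ite_and,
      LinearMap.mk₂_apply, mul_ite, mul_sub, mul_one, mul_zero, sum_ite_irrel, sum_sub_distrib,
      sum_ite_eq', mem_univ, ↓reduceIte, sum_const_zero]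
    ring
  have htrace : tracePairing D (antisymmSingle a b c) =
      ηm c c * ((if b = c then ηm a a * tr1 D a else 0) -
        (if a = c then ηm b b * tr1 D b else 0)) := by
    simp only [tracePairing, tr2_eq, LinearMap.mk₂_apply, antisymmSingle, ite_and, mul_ite, mul_sub,
      mul_one, mul_zero, sum_ite_eq', mem_univ, ↓reduceIte, eq_comm (a := c), sum_sub_distrib]
    split_ifs <;> ring
  have hasym : minkPairing (asymₗ D) (asymₗ (antisymmSingle a b c)) =
      2 * ηm a a * ηm b b * ηm c c * asym D a b c := by
    simp only [minkPairing, up3_eq, asymₗ, LinearMap.coe_mk, AddHom.coe_mk, LinearMap.mk₂_apply,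
      asym, mul_div_assoc', mul_sub, mul_add, antisymmSingle, ite_and, mul_ite, mul_one, mul_zero,
      ← sum_div, sum_sub_distrib, sum_add_distrib, sum_ite_eq', mem_univ, ↓reduceIte, sum_ite_irrel,
      sum_const_zero]
    ring
  simp only [qform, LinearMap.add_apply, LinearMap.smul_apply, LinearMap.compl₂_apply,
    LinearMap.compl₁₂_apply, hrev, htrace, hasym, smul_eq_mul]
  ring

lemma minkPairing_antisymmSingle (τ : T3) (a b c : Idx) :
    minkPairing (antisymmSingle a b c) τ = ηm a a * ηm b b * ηm c c * (τ a b c - τ b a c) := by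
  rw [minkPairing_comm]
  simp only [minkPairing, up3_eq, LinearMap.mk₂_apply, antisymmSingle, ite_and, mul_ite, mul_sub,
    mul_one, mul_zero, sum_ite_eq', mem_univ, ↓reduceIte, sum_sub_distrib, sum_ite_irrel,
    sum_const_zero]
  ring

lemma qform_eq_of_totally_antisymm (lam : ℝ) {τ : T3} (hτ1 : ∀ a b c, τ a b c = -τ b a c)
    (hτ2 : ∀ a b c, τ a b c = -τ a c b) {v : T3} (hv : v ∈ Wsub) :
    qform lam τ v = (lam - 1) * minkPairing v τ := by
  have hcyc := totally_antisymm_cyclic hτ1 hτ2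
  have hbasis : ∀ a b c, qform lam τ (antisymmSingle a b c) =
      (lam - 1) * minkPairing (antisymmSingle a b c) τ := fun a b c => by
    have htr : ∀ d, tr1 τ d = 0 := fun d => by
      simp [tr1_eq, fun a => show τ a d a = 0 by linarith [hτ2 a d a, hτ1 a a d]]
    have hasym : asym τ a b c = τ a b c := by
      simp only [asym]
      linarith [hτ2 a b c, hcyc b c a, hτ1 a b c, hcyc a b c, hτ1 c b a]
    rw [qform_antisymmSingle, minkPairing_antisymmSingle, htr, htr, hasym]
    simp only [mul_zero, ite_self, sub_zero, add_zero]
    linear_combination (ηm a a * ηm b b * ηm c c) *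
      (hτ1 c b a + hcyc b c a - hcyc a b c + (lam - 1) * hτ1 b a c)
  have hq := two_mul_map_eq_sum_antisymmSingle (qform lam τ) hv
  have hm := two_mul_map_eq_sum_antisymmSingle (minkPairing.flip τ) hv
  simp only [LinearMap.BilinForm.flip_apply, hbasis, mul_left_comm _ (lam - 1), ← mul_sum] at hq hm
  linear_combination (hq - (lam - 1) * hm) / 2

lemma qform_antisymmSingle_zero_succ_zero (lam : ℝ) {D : T3} (hD : D ∈ Wsub) (i : Fin 3) :
    qform lam D (antisymmSingle 0 i.succ 0) = ∑ j : Fin 3, D j.succ i.succ j.succ := by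
  simp [qform_antisymmSingle, asym_eq_of_mem_Wsub hD, tr1_eq, Fin.sum_univ_succ (n := 3), ηm,
    Fin.succ_ne_zero, mem_Wsub_apply_self hD, hD i.succ 0 0]

lemma qform_antisymmSingle_zero_succ_succ (lam : ℝ) {D : T3} (hD : D ∈ Wsub) (i j : Fin 3) :
    qform lam D (antisymmSingle 0 i.succ j.succ) =
      -(-D i.succ j.succ 0 + D 0 j.succ i.succ
        + 2 * lam / 3 * (D 0 i.succ j.succ + D i.succ j.succ 0 - D 0 j.succ i.succ)
        - if i = j then ∑ k : Fin 3, D 0 k.succ k.succ else 0) := by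
  have h0 : ∀ (k : Fin 3) c, D k.succ 0 c = -D 0 k.succ c := fun k c => hD _ _ _
  simp only [Fin.isValue, qform_antisymmSingle, ηm, ↓reduceIte, Fin.succ_ne_zero, mul_one,
    hD j.succ i.succ 0, h0, sub_neg_eq_add, asym_eq_of_mem_Wsub hD, neg_mul, one_mul, neg_add_rev,
    neg_neg, Fin.succ_inj, tr1_eq, ite_mul, Fin.sum_univ_succ (n := 3), mem_Wsub_apply_self hD,
    neg_zero, sum_neg_distrib, zero_add, mul_neg, (Fin.succ_ne_zero _).symm, sub_zero, mul_ite,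
    mul_zero, neg_sub]
  split_ifs <;> ring

lemma qform_antisymmSingle_succ_succ_zero (lam : ℝ) {D : T3} (hD : D ∈ Wsub) (i j : Fin 3) :
    qform lam D (antisymmSingle i.succ j.succ 0) =
      -(D 0 j.succ i.succ - D 0 i.succ j.succ
        + 2 * lam / 3 * (D 0 i.succ j.succ + D i.succ j.succ 0 - D 0 j.succ i.succ)) := by
  rw [qform_antisymmSingle, asym_eq_of_mem_Wsub hD, hD j.succ 0 i.succ]
  simp only [ηm, ↓reduceIte, Fin.succ_ne_zero, mul_one, mul_neg, one_mul, neg_mul, mul_zero,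
    sub_self]
  ring

lemma mixed_component_equations_iff {lam : ℝ} (hlam : lam ≠ 1) {x y : Fin 3 → Fin 3 → ℝ}
    (hy : ∀ i j, y i j = -y j i) :
    ((∀ i j, -y i j + x j i + 2 * lam / 3 * (x i j + y i j - x j i)
        - (if i = j then ∑ k, x k k else 0) = 0) ∧
      ∀ i j, x j i - x i j + 2 * lam / 3 * (x i j + y i j - x j i) = 0) ↔
      ∀ i j, x i j = 0 ∧ y i j = 0 := by
  constructor
  · rintro ⟨hE, hB⟩
    have hdiag : ∀ i, x i i = ∑ k, x k k := fun i => by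
      have hy0 : y i i = 0 := by linarith [hy i i]
      have := hE i i
      simp only [if_true, hy0, add_zero, sub_self, mul_zero] at this
      linarith
    have htrace : ∑ k, x k k = 0 := by
      have h := hdiag
      simp only [Fin.sum_univ_three] at h ⊢
      linarith [h 0, h 1, h 2]
    intro i j
    have e₁ := hE i j
    have e₂ := hE j i
    have e₃ := hB i j
    rw [htrace, ite_self, sub_zero] at e₁ e₂
    rw [hy j i] at e₂
    have hx : (lam - 1) * x i j = 0 := by
      linear_combination (e₃ - e₁ - e₂ + 2 * lam / 3 * (2 * e₁ + e₂ - e₃)) / 2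
    have hx0 : x i j = 0 := (mul_eq_zero.mp hx).resolve_left (sub_ne_zero.mpr hlam)
    exact ⟨hx0, by linear_combination hx0 - e₁ + e₃⟩
  · intro h
    simp [h]

lemma forall_mem_W0_qform_eq_zero_iff {lam : ℝ} (hlam : lam ≠ 1) {D : T3} (hD : D ∈ Wsub) :
    (∀ v ∈ W0, qform lam D v = 0) ↔
      (∀ i : Fin 3, ∑ j : Fin 3, D j.succ i.succ j.succ = 0) ∧
        ∀ i j : Fin 3, D 0 i.succ j.succ = 0 ∧ D i.succ j.succ 0 = 0 := by
  rw [forall_mem_W0_map_eq_zero_iff, ← mixed_component_equations_iff hlam (fun i j => hD _ _ _)]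
  simp only [qform_antisymmSingle_zero_succ_zero lam hD, qform_antisymmSingle_zero_succ_succ lam hD,
    qform_antisymmSingle_succ_succ_zero lam hD, neg_eq_zero]

theorem fderiv_qfun_sub_eq_zero_iff {lam : ℝ} (hlam : lam ≠ 1) (g : ℝ) {K : T3} (hK : K ∈ Wsub)
    {τ : T3} (hτ1 : ∀ a b c, τ a b c = -τ b a c) (hτ2 : ∀ a b c, τ a b c = -τ a c b) (H : W0) :
    fderiv ℝ (fun H : W0 =>
        qfun lam K (H : T3) - 2 * g * ∑ a, ∑ b, ∑ c, up3 (H : T3) a b c * τ a b c) H = 0 ↔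
      (∀ i : Fin 3, ∑ j : Fin 3, K i.succ j.succ j.succ = 0) ∧
        ∀ i j : Fin 3,
          (H : T3) 0 i.succ j.succ = K 0 i.succ j.succ + (g / (lam - 1)) * τ 0 i.succ j.succ ∧
          (H : T3) i.succ j.succ 0 = K i.succ j.succ 0 + (g / (lam - 1)) * τ 0 i.succ j.succ := by
  set D : T3 := H - K - (g / (lam - 1)) • τ
  have hDW : D ∈ Wsub := sub_mem (sub_mem (W0_le_Wsub H.2) hK) (Wsub.smul_mem _ hτ1)
  have hshift : ∀ v ∈ Wsub, qform lam (H - K) v - g * minkPairing v τ = qform lam D v := by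
    intro v hv
    have hlam' : lam - 1 ≠ 0 := sub_ne_zero.mpr hlam
    simp only [D, map_sub, map_smul, LinearMap.sub_apply, LinearMap.smul_apply, smul_eq_mul,
      qform_eq_of_totally_antisymm lam hτ1 hτ2 hv]
    field_simp
  have hcrit : fderiv ℝ (fun H : W0 =>
        qfun lam K (H : T3) - 2 * g * ∑ a, ∑ b, ∑ c, up3 (H : T3) a b c * τ a b c) H = 0 ↔
      ∀ v ∈ W0, qform lam D v = 0 := by
    rw [ContinuousLinearMap.ext_iff, Subtype.forall]
    refine forall₂_congr fun v hv => ?_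
    rw [fderiv_qfun_sub_apply lam g hK τ H ⟨v, hv⟩, hshift v (W0_le_Wsub hv)]
    simp
  rw [hcrit, forall_mem_W0_qform_eq_zero_iff hlam hDW]
  refine and_congr (forall_congr' fun i => ?_) (forall₂_congr fun i j => and_congr ?_ ?_)
  · refine Eq.congr_left (sum_congr rfl fun j _ => ?_)
    have hτ0 : τ j.succ i.succ j.succ = 0 := by
      linarith [hτ2 j.succ i.succ j.succ, hτ1 j.succ j.succ i.succ]
    simp [D, H.2.2, hK j.succ i.succ j.succ, hτ0]
  · simp only [D, Pi.sub_apply, sub_sub, sub_eq_zero, Pi.add_apply, Pi.smul_apply, smul_eq_mul]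
  · simp only [D, Pi.sub_apply, sub_sub, sub_eq_zero, Pi.add_apply, Pi.smul_apply, smul_eq_mul,
      totally_antisymm_cyclic hτ1 hτ2 i.succ j.succ 0]

def dropSpatial (X : T3) : T3 := fun a b c => if a ≠ 0 ∧ b ≠ 0 ∧ c ≠ 0 then 0 else X a b c

lemma dropSpatial_mem_W0 {X : T3} (hX : X ∈ Wsub) : dropSpatial X ∈ W0 := by
  refine ⟨fun a b c => ?_, fun i j k => by simp [dropSpatial, Fin.succ_ne_zero]⟩
  simp only [dropSpatial, ← and_assoc, and_comm (a := a ≠ 0)]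
  split_ifs <;> simp [hX a b c]

theorem statement17_general (lam : ℝ) (hlam : lam ≠ 1) (g : ℝ)
    (K : T3) (hK : ∀ a b c, K a b c = -K b a c)
    (τ : T3) (hτ1 : ∀ a b c, τ a b c = -τ b a c) (hτ2 : ∀ a b c, τ a b c = -τ a c b) :
    ((∃ H : W0, fderiv ℝ (fun H : W0 =>
        qfun lam K (H : T3) - 2 * g * ∑ a, ∑ b, ∑ c, up3 (H : T3) a b c * τ a b c) H = 0) ↔
      ∀ i : Fin 3, (∑ j : Fin 3, K i.succ j.succ j.succ) = 0) ∧
    ((∀ i : Fin 3, (∑ j : Fin 3, K i.succ j.succ j.succ) = 0) →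
      ∀ H : W0, (fderiv ℝ (fun H : W0 =>
          qfun lam K (H : T3) - 2 * g * ∑ a, ∑ b, ∑ c, up3 (H : T3) a b c * τ a b c) H = 0 ↔
        ∀ i j : Fin 3,
          (H : T3) 0 i.succ j.succ = K 0 i.succ j.succ + (g / (lam - 1)) * τ 0 i.succ j.succ ∧
          (H : T3) i.succ j.succ 0 = K i.succ j.succ 0 + (g / (lam - 1)) * τ 0 i.succ j.succ)) := by
  have hcrit := fderiv_qfun_sub_eq_zero_iff hlam g (K := K) hK hτ1 hτ2
  refine ⟨⟨fun ⟨H, hH⟩ => ((hcrit H).mp hH).1, fun htr => ?_⟩,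
    fun htr H => (hcrit H).trans (and_iff_right htr)⟩
  have hX : K + (g / (lam - 1)) • τ ∈ Wsub := add_mem hK (Wsub.smul_mem _ hτ1)
  refine ⟨⟨dropSpatial _, dropSpatial_mem_W0 hX⟩, (hcrit _).mpr ⟨htr, fun i j => ?_⟩⟩
  simp [dropSpatial, Fin.succ_ne_zero, totally_antisymm_cyclic hτ1 hτ2 i.succ j.succ 0]

/-- Coupling to the totally antisymmetric spin angular momentum `τ`:
for λ ≠ 1 and a nonzero gravitational coupling `g`, the functional
`f(H) = q(H) − 2g H^{abc} τ_{abc}` on the constraint subspace `W₀` has a critical point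
iff `Σⱼ K_{ijj} = 0` for each spatial `i`; in that case `H ∈ W₀` is a critical point iff
`H_{0ij} = K_{0ij} + (g/(λ−1)) τ_{0ij}` and `H_{ij0} = K_{ij0} + (g/(λ−1)) τ_{0ij}` for
all spatial `i,j` (the components `H_{0i0}` being arbitrary). -/
theorem statement17 (lam : ℝ) (hlam : lam ≠ 1) (g : ℝ) (hg : g ≠ 0)
    (K : T3) (hK : ∀ a b c, K a b c = -K b a c)
    (τ : T3) (hτ1 : ∀ a b c, τ a b c = -τ b a c) (hτ2 : ∀ a b c, τ a b c = -τ a c b) :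
    ((∃ H : W0, fderiv ℝ (fun H : W0 =>
        qfun lam K (H : T3) - 2 * g * ∑ a, ∑ b, ∑ c, up3 (H : T3) a b c * τ a b c) H = 0) ↔
      ∀ i : Fin 3, (∑ j : Fin 3, K i.succ j.succ j.succ) = 0) ∧
    ((∀ i : Fin 3, (∑ j : Fin 3, K i.succ j.succ j.succ) = 0) →
      ∀ H : W0, (fderiv ℝ (fun H : W0 =>
          qfun lam K (H : T3) - 2 * g * ∑ a, ∑ b, ∑ c, up3 (H : T3) a b c * τ a b c) H = 0 ↔
        ∀ i j : Fin 3,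
          (H : T3) 0 i.succ j.succ = K 0 i.succ j.succ + (g / (lam - 1)) * τ 0 i.succ j.succ ∧
          (H : T3) i.succ j.succ 0 = K i.succ j.succ 0 + (g / (lam - 1)) * τ 0 i.succ j.succ)) :=
  statement17_general lam hlam g K hK τ hτ1 hτ2
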